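/- Let P be a Kantor pair over 𝕂. Then the restriction map χ ↦ (χ|_{P⁻}, χ|_{P⁺}) is an isomorphism of unital associative 𝕂-algebras from the graded centroid C(𝔎(P), ℤ) of the Kantor Lie algebra 𝔎(P) (with its standard 5-grading) onto the centroid C(P) of P. -/

import Mathlib

/-- A Kantor pair over `K`: a pair of modules `(Pm, Pp)` (for `P⁻`, `P⁺`) with trilinear
products `tm : P⁻ × P⁺ × P⁻ → P⁻` and `tp : P⁺ × P⁻ × P⁺ → P⁺` satisfying the Kantor
identities (K1) and (K2). -/
structure KantorPair (K : Type*) [CommRing K] (Pm Pp : Type*)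
    [AddCommGroup Pm] [AddCommGroup Pp] [Module K Pm] [Module K Pp] where
  tm : Pm → Pp → Pm → Pm
  tp : Pp → Pm → Pp → Pp
  tm_add₁ : ∀ x x' y z, tm (x + x') y z = tm x y z + tm x' y z
  tm_smul₁ : ∀ (a : K) x y z, tm (a • x) y z = a • tm x y z
  tm_add₂ : ∀ x y y' z, tm x (y + y') z = tm x y z + tm x y' z
  tm_smul₂ : ∀ (a : K) x y z, tm x (a • y) z = a • tm x y z
  tm_add₃ : ∀ x y z z', tm x y (z + z') = tm x y z + tm x y z'
  tm_smul₃ : ∀ (a : K) x y z, tm x y (a • z) = a • tm x y z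
  tp_add₁ : ∀ x x' y z, tp (x + x') y z = tp x y z + tp x' y z
  tp_smul₁ : ∀ (a : K) x y z, tp (a • x) y z = a • tp x y z
  tp_add₂ : ∀ x y y' z, tp x (y + y') z = tp x y z + tp x y' z
  tp_smul₂ : ∀ (a : K) x y z, tp x (a • y) z = a • tp x y z
  tp_add₃ : ∀ x y z z', tp x y (z + z') = tp x y z + tp x y z'
  tp_smul₃ : ∀ (a : K) x y z, tp x y (a • z) = a • tp x y z
  k1m : ∀ (x z u : Pm) (y w : Pp),
    tm x y (tm z w u) - tm z w (tm x y u) = tm (tm x y z) w u - tm z (tp y x w) u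
  k1p : ∀ (x z u : Pp) (y w : Pm),
    tp x y (tp z w u) - tp z w (tp x y u) = tp (tp x y z) w u - tp z (tm y x w) u
  k2m : ∀ (x z u : Pm) (w v : Pp),
    (tm x (tp w u v) z - tm z (tp w u v) x) + tm u w (tm x v z - tm z v x)
      = tm (tm x w z - tm z w x) v u - tm u v (tm x w z - tm z w x)
  k2p : ∀ (x z u : Pp) (w v : Pm),
    (tp x (tm w u v) z - tp z (tm w u v) x) + tp u w (tp x v z - tp z v x)
      = tp (tp x w z - tp z w x) v u - tp u v (tp x w z - tp z w x)

namespace KantorPair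

variable {K : Type*} [CommRing K] {Pm Pp : Type*}
  [AddCommGroup Pm] [AddCommGroup Pp] [Module K Pm] [Module K Pp]

/-- `Q = (Qm, Qp)` is an ideal of the Kantor pair:
`{P,P,Q} + {P,Q,P} + {Q,P,P} ⊆ Q` on each side. -/
def IsIdealPair (KP : KantorPair K Pm Pp) (Qm : Submodule K Pm) (Qp : Submodule K Pp) : Prop :=
  (∀ (x z : Pm) (y : Pp) (q : Pm), q ∈ Qm → KP.tm x y q ∈ Qm ∧ KP.tm q y z ∈ Qm) ∧
  (∀ (x z : Pm) (r : Pp), r ∈ Qp → KP.tm x r z ∈ Qm) ∧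
  (∀ (x z : Pp) (y : Pm) (q : Pp), q ∈ Qp → KP.tp x y q ∈ Qp ∧ KP.tp q y z ∈ Qp) ∧
  (∀ (x z : Pp) (r : Pm), r ∈ Qm → KP.tp x r z ∈ Qp)

/-- A Kantor pair is simple if some product is nonzero and its only ideals are `0` and `P`. -/
def IsSimplePair (KP : KantorPair K Pm Pp) : Prop :=
  ((∃ x y z, KP.tm x y z ≠ 0) ∨ (∃ x y z, KP.tp x y z ≠ 0)) ∧
  ∀ Qm Qp, KP.IsIdealPair Qm Qp → (Qm = ⊥ ∧ Qp = ⊥) ∨ (Qm = ⊤ ∧ Qp = ⊤)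

/-- `(ωm, ωp)` belongs to the centroid of the Kantor pair. -/
def InCentroid (KP : KantorPair K Pm Pp) (ωm : Pm →ₗ[K] Pm) (ωp : Pp →ₗ[K] Pp) : Prop :=
  (∀ x y z, ωm (KP.tm x y z) = KP.tm (ωm x) y z ∧
      ωm (KP.tm x y z) = KP.tm x (ωp y) z ∧ ωm (KP.tm x y z) = KP.tm x y (ωm z)) ∧
  (∀ x y z, ωp (KP.tp x y z) = KP.tp (ωp x) y z ∧
      ωp (KP.tp x y z) = KP.tp x (ωm y) z ∧ ωp (KP.tp x y z) = KP.tp x y (ωp z))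

/-- The Kantor pair is central: `a ↦ (a • id, a • id)` is an isomorphism of `K`
onto the centroid. -/
def IsCentralPair (KP : KantorPair K Pm Pp) : Prop :=
  (∀ ωm ωp, KP.InCentroid ωm ωp →
    ∃ a : K, ωm = a • (LinearMap.id : Pm →ₗ[K] Pm) ∧ ωp = a • (LinearMap.id : Pp →ₗ[K] Pp)) ∧
  ∀ a : K, a • (LinearMap.id : Pm →ₗ[K] Pm) = 0 →
    a • (LinearMap.id : Pp →ₗ[K] Pp) = 0 → a = 0

/-- A Jordan pair is a Kantor pair with vanishing K-operators, i.e. symmetric products. -/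
def IsJordanPair (KP : KantorPair K Pm Pp) : Prop :=
  (∀ (x z : Pm) (y : Pp), KP.tm x y z = KP.tm z y x) ∧
  (∀ (x z : Pp) (y : Pm), KP.tp x y z = KP.tp z y x)

end KantorPair

/-- A 5-grading (= BC₁-grading) of a Lie algebra `L` over `K`:
an internal direct sum decomposition `L = ⊕_{i ∈ ℤ} L_i` with `⁅L_i, L_j⁆ ⊆ L_{i+j}`
and `L_i = 0` for `|i| > 2`. -/
structure FiveGrading (K : Type*) [CommRing K] (L : Type*) [LieRing L] [LieAlgebra K L] where
  g : ℤ → Submodule K L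
  internal : DirectSum.IsInternal g
  lie_mem : ∀ (i j : ℤ) (x y : L), x ∈ g i → y ∈ g j → ⁅x, y⁆ ∈ g (i + j)
  vanish : ∀ i : ℤ, 2 < |i| → g i = ⊥

/-- `T_L(P) = L_{-1} ⊕ L_1` as a submodule of `L`. -/
def Tsub {K : Type*} [CommRing K] {L : Type*} [LieRing L] [LieAlgebra K L]
    (fg : FiveGrading K L) : Submodule K L :=
  fg.g (-1) ⊔ fg.g 1

/-- The span of all brackets `⁅x, y⁆` with `x ∈ U`, `y ∈ V`. -/
def brkSpan (K : Type*) [CommRing K] {L : Type*} [LieRing L] [LieAlgebra K L]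
    (U V : Submodule K L) : Submodule K L :=
  Submodule.span K {w : L | ∃ x ∈ U, ∃ y ∈ V, w = ⁅x, y⁆}

/-- A 5-graded Lie algebra `L` tightly envelops the Kantor pair `(L_{-1}, L_1)` if it
is generated as a Lie algebra by `T = L_{-1} ⊕ L_1` and `Z(L) ∩ [T, T] = 0`. -/
def Tight (K : Type*) [CommRing K] {L : Type*} [LieRing L] [LieAlgebra K L]
    (fg : FiveGrading K L) : Prop :=
  LieSubalgebra.lieSpan K L ↑(Tsub fg) = ⊤ ∧
  ∀ z ∈ brkSpan K (Tsub fg) (Tsub fg), (∀ u : L, ⁅z, u⁆ = 0) → z = 0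

/-- A 5-graded Lie algebra `(L, fg)` envelops a Kantor pair `KP`: there are identifications
of `P⁻` with `L_{-1}` and `P⁺` with `L_1` under which the products of `KP` are the products
`⁅⁅x, y⁆, z⁆` of `L`. -/
structure Envelops {K : Type*} [CommRing K] {Pm Pp : Type*}
    [AddCommGroup Pm] [AddCommGroup Pp] [Module K Pm] [Module K Pp]
    (KP : KantorPair K Pm Pp)
    {L : Type*} [LieRing L] [LieAlgebra K L] (fg : FiveGrading K L) where
  em : Pm →ₗ[K] L
  ep : Pp →ₗ[K] L
  inj_m : Function.Injective em
  inj_p : Function.Injective ep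
  range_m : LinearMap.range em = fg.g (-1)
  range_p : LinearMap.range ep = fg.g 1
  compat_m : ∀ (x z : Pm) (y : Pp), em (KP.tm x y z) = ⁅⁅em x, ep y⁆, em z⁆
  compat_p : ∀ (x z : Pp) (y : Pm), ep (KP.tp x y z) = ⁅⁅ep x, em y⁆, ep z⁆

/-- A short Peirce grading (SP-grading) of a Kantor pair: a `ℤ`-grading with support
contained in `{0, 1}`. -/
structure SPGrading {K : Type*} [CommRing K] {Pm Pp : Type*}
    [AddCommGroup Pm] [AddCommGroup Pp] [Module K Pm] [Module K Pp]
    (KP : KantorPair K Pm Pp) where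
  Qm : ℤ → Submodule K Pm
  Qp : ℤ → Submodule K Pp
  sup_m : Qm 0 ⊔ Qm 1 = ⊤
  disj_m : Disjoint (Qm 0) (Qm 1)
  sup_p : Qp 0 ⊔ Qp 1 = ⊤
  disj_p : Disjoint (Qp 0) (Qp 1)
  vanish_m : ∀ i : ℤ, i ≠ 0 → i ≠ 1 → Qm i = ⊥
  vanish_p : ∀ i : ℤ, i ≠ 0 → i ≠ 1 → Qp i = ⊥
  grade_m : ∀ (i j k : ℤ) (x : Pm) (y : Pp) (z : Pm),
    x ∈ Qm i → y ∈ Qp j → z ∈ Qm k → KP.tm x y z ∈ Qm (i - j + k)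
  grade_p : ∀ (i j k : ℤ) (x : Pp) (y : Pm) (z : Pp),
    x ∈ Qp i → y ∈ Qm j → z ∈ Qp k → KP.tp x y z ∈ Qp (i - j + k)

/-- `KPc` is the reflection `P̌` of the SP-graded Kantor pair `(KP, SP)`:
`P̌^σ = P₀^{-σ} ⊕ P₁^σ`, with products given by the reflection formula. -/
def IsReflection {K : Type*} [CommRing K] {Pm Pp : Type*}
    [AddCommGroup Pm] [AddCommGroup Pp] [Module K Pm] [Module K Pp]
    (KP : KantorPair K Pm Pp) (SP : SPGrading KP)
    (KPc : KantorPair K ((SP.Qp 0) × (SP.Qm 1)) ((SP.Qm 0) × (SP.Qp 1))) : Prop :=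
  (∀ (a c : (SP.Qm 0) × (SP.Qp 1)) (b : (SP.Qp 0) × (SP.Qm 1)),
    ((KPc.tp a b c).1 : Pm)
      = KP.tm a.1 b.1 c.1 - KP.tm b.2 a.2 c.1 + (KP.tm a.1 c.2 b.2 - KP.tm b.2 c.2 a.1) ∧
    ((KPc.tp a b c).2 : Pp)
      = KP.tp a.2 b.2 c.2 - KP.tp b.1 a.1 c.2 + (KP.tp a.2 c.1 b.1 - KP.tp b.1 c.1 a.2)) ∧
  (∀ (a c : (SP.Qp 0) × (SP.Qm 1)) (b : (SP.Qm 0) × (SP.Qp 1)),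
    ((KPc.tm a b c).1 : Pp)
      = KP.tp a.1 b.1 c.1 - KP.tp b.2 a.2 c.1 + (KP.tp a.1 c.2 b.2 - KP.tp b.2 c.2 a.1) ∧
    ((KPc.tm a b c).2 : Pm)
      = KP.tm a.2 b.2 c.2 - KP.tm b.1 a.1 c.2 + (KP.tm a.2 c.1 b.1 - KP.tm b.1 c.1 a.2))

/-- The graded centroid `C(L, ℤ)` of a `ℤ`-graded Lie algebra. -/
def GradedCentroid (K : Type*) [CommRing K] {L : Type*} [LieRing L] [LieAlgebra K L]
    (fg : FiveGrading K L) : Set (Module.End K L) :=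
  {χ | (∀ x y : L, χ ⁅x, y⁆ = ⁅χ x, y⁆) ∧ ∀ (i : ℤ) (x : L), x ∈ fg.g i → χ x ∈ fg.g i}

/-- `ω = (ω⁻, ω⁺)` is the restriction of `χ` to `(P⁻, P⁺)` under the identifications. -/
def RestrRel {K : Type*} [CommRing K] {Pm Pp : Type*}
    [AddCommGroup Pm] [AddCommGroup Pp] [Module K Pm] [Module K Pp]
    {KP : KantorPair K Pm Pp} {L : Type*} [LieRing L] [LieAlgebra K L]
    {fg : FiveGrading K L} (E : Envelops KP fg)
    (χ : Module.End K L) (ω : (Pm →ₗ[K] Pm) × (Pp →ₗ[K] Pp)) : Prop :=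
  (∀ x : Pm, χ (E.em x) = E.em (ω.1 x)) ∧ (∀ y : Pp, χ (E.ep y) = E.ep (ω.2 y))

/-!
`𝔎(P)` is generated by `T = P⁻ ⊕ P⁺`, and `⁅⁅T, T⁆, T⁆ ⊆ T` by the triple-product formula, so
`𝔎(P) = T ⊕ ⁅T, T⁆`, the two summands living in odd and even degrees. A graded centroid element
preserves `P^±`, and its bracket identity makes the restriction a centroid element of `P`.
Conversely, `ω ∈ C(P)` is extended by `⁅x, y⁆ ↦ ⁅ω x, y⁆`. This is well defined: if
`∑ ⁅xᵢ, yᵢ⁆ = 0`, then `∑ ⁅ω xᵢ, yᵢ⁆ ∈ ⁅T, T⁆` commutes with `T`, because `ω` commutes with the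
triple product in every slot; hence it is central and vanishes by tightness. The extension `χ` lies
in the centroid because the `v` with `χ ⁅u, v⁆ = ⁅χ u, v⁆` for all `u` form a subalgebra (Jacobi),
and it is graded because the `Lᵢ ∩ χ⁻¹ Lᵢ` still add up to `L`.
-/

namespace LinearMap

variable {R M N P : Type*} [CommRing R] [AddCommGroup M] [AddCommGroup N] [AddCommGroup P]
  [Module R M] [Module R N] [Module R P]

theorem exists_comp_eq_of_surjective {f : M →ₗ[R] N} {g : M →ₗ[R] P}
    (hf : Function.Surjective f) (h : ker f ≤ ker g) : ∃ φ : N →ₗ[R] P, φ ∘ₗ f = g :=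
  ⟨(ker f).liftQ g h ∘ₗ (f.quotKerEquivOfSurjective hf).symm.toLinearMap, by ext; simp⟩

theorem exists_comp_eq_of_injective {f : N →ₗ[R] M} {g : P →ₗ[R] M}
    (hf : Function.Injective f) (h : range g ≤ range f) : ∃ φ : P →ₗ[R] N, f ∘ₗ φ = g :=
  ⟨(LinearEquiv.ofInjective f hf).symm.toLinearMap ∘ₗ
      g.codRestrict (range f) (fun x => h (mem_range_self g x)),
    by ext x; exact congrArg Subtype.val ((LinearEquiv.ofInjective f hf).apply_symm_apply _)⟩

end LinearMap

section LieSpan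

variable {K L : Type*} [CommRing K] [LieRing L] [LieAlgebra K L]

theorem lie_mem_brkSpan {U W : Submodule K L} {x y : L} (hx : x ∈ U) (hy : y ∈ W) :
    ⁅x, y⁆ ∈ brkSpan K U W :=
  Submodule.subset_span ⟨x, hx, y, hy, rfl⟩

theorem lie_mem_of_mem_brkSpan {U W M : Submodule K L} {u s : L}
    (h : ∀ x ∈ U, ∀ y ∈ W, ⁅u, ⁅x, y⁆⁆ ∈ M) (hs : s ∈ brkSpan K U W) : ⁅u, s⁆ ∈ M := by
  have hle : brkSpan K U W ≤ M.comap (LieModule.toEnd K L L u) :=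
    Submodule.span_le.2 fun _ ⟨x, hx, y, hy, hxy⟩ => hxy ▸ h x hx y hy
  exact hle hs

theorem lieSpan_le_sup_brkSpan {V : Submodule K L}
    (hV : ∀ x ∈ V, ∀ y ∈ V, ∀ z ∈ V, ⁅⁅x, y⁆, z⁆ ∈ V) :
    (LieSubalgebra.lieSpan K L (V : Set L)).toSubmodule ≤ V ⊔ brkSpan K V V := by
  have hVB : ∀ t ∈ V, ∀ s ∈ brkSpan K V V, ⁅t, s⁆ ∈ V := fun t ht s hs =>
    lie_mem_of_mem_brkSpan (fun x hx y hy => by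
      rw [← lie_skew]; exact V.neg_mem (hV x hx y hy t ht)) hs
  have hBV : ∀ s ∈ brkSpan K V V, ∀ t ∈ V, ⁅s, t⁆ ∈ V := fun s hs t ht => by
    rw [← lie_skew]; exact V.neg_mem (hVB t ht s hs)
  have hBB : ∀ s ∈ brkSpan K V V, ∀ s' ∈ brkSpan K V V, ⁅s, s'⁆ ∈ brkSpan K V V :=
    fun s hs s' hs' => lie_mem_of_mem_brkSpan (fun x hx y hy => by
      rw [leibniz_lie]
      exact add_mem (lie_mem_brkSpan (hBV s hs x hx) hy)
        (lie_mem_brkSpan hx (hBV s hs y hy))) hs'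
  let S : LieSubalgebra K L :=
    { toSubmodule := V ⊔ brkSpan K V V
      lie_mem' := fun {u v} hu hv => by
        obtain ⟨t, ht, s, hs, rfl⟩ := Submodule.mem_sup.1 hu
        obtain ⟨t', ht', s', hs', rfl⟩ := Submodule.mem_sup.1 hv
        rw [lie_add, add_lie, add_lie]
        exact add_mem
          (add_mem (Submodule.mem_sup_right (lie_mem_brkSpan ht ht'))
            (Submodule.mem_sup_left (hBV s hs t' ht')))
          (add_mem (Submodule.mem_sup_left (hVB t ht s' hs'))
            (Submodule.mem_sup_right (hBB s hs s' hs'))) }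
  exact (LieSubalgebra.lieSpan_le (K := S)).2 fun x hx => Submodule.mem_sup_left hx

variable {S : Set L}

theorem map_lie_of_lieSpan_eq_top (hS : LieSubalgebra.lieSpan K L S = ⊤) (χ : Module.End K L)
    (h : ∀ u, ∀ s ∈ S, χ ⁅u, s⁆ = ⁅χ u, s⁆) (u v : L) : χ ⁅u, v⁆ = ⁅χ u, v⁆ := by
  have hv : v ∈ LieSubalgebra.lieSpan K L S := hS ▸ LieSubalgebra.mem_top v
  induction hv using LieSubalgebra.lieSpan_induction generalizing u with
  | mem s hs => exact h u s hs
  | zero => simp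
  | add x y _ _ hx hy => rw [lie_add, map_add, hx, hy, lie_add]
  | smul a x _ hx => rw [lie_smul, map_smul, hx, lie_smul]
  | lie x y _ _ hx hy =>
    -- Jacobi: `⁅u, ⁅x, y⁆⁆ = ⁅⁅u, x⁆, y⁆ - ⁅⁅u, y⁆, x⁆`
    rw [leibniz_lie, ← lie_skew x, map_add, map_neg, hy, hx, hx, hy, lie_skew, ← leibniz_lie]

theorem ext_of_lieSpan_eq_top (hS : LieSubalgebra.lieSpan K L S = ⊤) {χ χ' : Module.End K L}
    (hχ : ∀ u v, χ ⁅u, v⁆ = ⁅χ u, v⁆)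
    (hχ' : ∀ u v, χ' ⁅u, v⁆ = ⁅χ' u, v⁆) (h : Set.EqOn χ χ' S) : χ = χ' := by
  ext u
  have hu : u ∈ LieSubalgebra.lieSpan K L S := hS ▸ LieSubalgebra.mem_top u
  induction hu using LieSubalgebra.lieSpan_induction with
  | mem s hs => exact h hs
  | zero => simp
  | add x y _ _ hx hy => rw [map_add, map_add, hx, hy]
  | smul a x _ hx => rw [map_smul, map_smul, hx]
  | lie x y _ _ hx _ => rw [hχ, hχ', hx]

theorem lie_eq_zero_of_lieSpan_eq_top (hS : LieSubalgebra.lieSpan K L S = ⊤) {z : L}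
    (hz : ∀ s ∈ S, ⁅z, s⁆ = 0) (u : L) : ⁅z, u⁆ = 0 := by
  have hu : u ∈ LieSubalgebra.lieSpan K L S := hS ▸ LieSubalgebra.mem_top u
  induction hu using LieSubalgebra.lieSpan_induction with
  | mem s hs => exact hz s hs
  | zero => simp
  | add x y _ _ hx hy => rw [lie_add, hx, hy, add_zero]
  | smul a x _ hx => rw [lie_smul, hx, smul_zero]
  | lie x y _ _ hx hy => rw [leibniz_lie, hx, hy, zero_lie, lie_zero, add_zero]

end LieSpan

section LieTensor

open TensorProduct

variable {K L M : Type*} [CommRing K] [LieRing L] [LieAlgebra K L] [AddCommGroup M] [Module K M]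

def lieTensorMap (f g : M →ₗ[K] L) : M ⊗[K] M →ₗ[K] L :=
  (LieModule.toModuleHom K L L : L ⊗[K] L →ₗ[K] L) ∘ₗ TensorProduct.map f g

@[simp]
theorem lieTensorMap_tmul (f g : M →ₗ[K] L) (x y : M) :
    lieTensorMap f g (x ⊗ₜ y) = ⁅f x, g y⁆ := by
  simp [lieTensorMap]

theorem range_lieTensorMap_le {f g : M →ₗ[K] L} {U W : Submodule K L}
    (hf : LinearMap.range f ≤ U) (hg : LinearMap.range g ≤ W) :
    LinearMap.range (lieTensorMap f g) ≤ brkSpan K U W := by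
  rintro _ ⟨s, rfl⟩
  induction s using TensorProduct.induction_on with
  | zero => simp
  | tmul x y => simpa using lie_mem_brkSpan (hf ⟨x, rfl⟩) (hg ⟨y, rfl⟩)
  | add s t hs ht => rw [map_add]; exact add_mem hs ht

end LieTensor

namespace KantorPair

variable {K : Type*} [CommRing K] {Pm Pp : Type*}
  [AddCommGroup Pm] [AddCommGroup Pp] [Module K Pm] [Module K Pp]

/-- The triple product `⁅⁅p, q⁆, r⁆` of `𝔎(P)` restricted to `P⁻ ⊕ P⁺`. -/
def lieTriple (KP : KantorPair K Pm Pp) (p q r : Pm × Pp) : Pm × Pp :=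
  (KP.tm p.1 q.2 r.1 - KP.tm q.1 p.2 r.1 + (KP.tm p.1 r.2 q.1 - KP.tm q.1 r.2 p.1),
   KP.tp p.2 q.1 r.2 - KP.tp q.2 p.1 r.2 + (KP.tp p.2 r.1 q.2 - KP.tp q.2 r.1 p.2))

variable {KP : KantorPair K Pm Pp} {ωm : Pm →ₗ[K] Pm} {ωp : Pp →ₗ[K] Pp}

theorem InCentroid.lieTriple_map_left (hc : KP.InCentroid ωm ωp) (p q r : Pm × Pp) :
    KP.lieTriple (ωm.prodMap ωp p) q r = ωm.prodMap ωp (KP.lieTriple p q r) := by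
  obtain ⟨hm, hp⟩ := hc
  simp only [lieTriple, LinearMap.prodMap_apply, map_add, map_sub,
    fun x y z => (hm x y z).1.symm, fun x y z => (hm x y z).2.1.symm,
    fun x y z => (hm x y z).2.2.symm, fun x y z => (hp x y z).1.symm,
    fun x y z => (hp x y z).2.1.symm, fun x y z => (hp x y z).2.2.symm]

theorem InCentroid.lieTriple_map_right (hc : KP.InCentroid ωm ωp) (p q r : Pm × Pp) :
    KP.lieTriple p q (ωm.prodMap ωp r) = ωm.prodMap ωp (KP.lieTriple p q r) := by
  obtain ⟨hm, hp⟩ := hc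
  simp only [lieTriple, LinearMap.prodMap_apply, map_add, map_sub,
    fun x y z => (hm x y z).2.1.symm, fun x y z => (hm x y z).2.2.symm,
    fun x y z => (hp x y z).2.1.symm, fun x y z => (hp x y z).2.2.symm]

end KantorPair

namespace FiveGrading

variable {K L : Type*} [CommRing K] [LieRing L] [LieAlgebra K L] (fg : FiveGrading K L)

theorem lie_lie_eq_zero {i j k : ℤ} {x y z : L} (hx : x ∈ fg.g i) (hy : y ∈ fg.g j)
    (hz : z ∈ fg.g k) (h : 2 < |i + j + k|) : ⁅⁅x, y⁆, z⁆ = 0 := by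
  have := fg.lie_mem _ _ _ _ (fg.lie_mem _ _ _ _ hx hy) hz
  rwa [fg.vanish _ h, Submodule.mem_bot] at this

variable {fg}

theorem lie_mem_of_mem_Tsub {M : Submodule K L}
    (h : ∀ i j : ℤ, (i = -1 ∨ i = 1) → (j = -1 ∨ j = 1) →
      ∀ x ∈ fg.g i, ∀ y ∈ fg.g j, ⁅x, y⁆ ∈ M)
    {x y : L} (hx : x ∈ Tsub fg) (hy : y ∈ Tsub fg) : ⁅x, y⁆ ∈ M := by
  obtain ⟨x₁, hx₁, x₂, hx₂, rfl⟩ := Submodule.mem_sup.1 hx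
  obtain ⟨y₁, hy₁, y₂, hy₂, rfl⟩ := Submodule.mem_sup.1 hy
  rw [add_lie, lie_add, lie_add]
  exact add_mem (add_mem (h _ _ (.inl rfl) (.inl rfl) _ hx₁ _ hy₁)
      (h _ _ (.inl rfl) (.inr rfl) _ hx₁ _ hy₂))
    (add_mem (h _ _ (.inr rfl) (.inl rfl) _ hx₂ _ hy₁) (h _ _ (.inr rfl) (.inr rfl) _ hx₂ _ hy₂))

-- `T` lives in odd degrees and `⁅T, T⁆` in even ones.
theorem disjoint_Tsub_brkSpan : Disjoint (Tsub fg) (brkSpan K (Tsub fg) (Tsub fg)) := by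
  have hodd : Tsub fg ≤ ⨆ i ∈ {i : ℤ | Odd i}, fg.g i :=
    sup_le (le_biSup fg.g (by decide : Odd (-1 : ℤ))) (le_biSup fg.g (by decide : Odd (1 : ℤ)))
  have heven : brkSpan K (Tsub fg) (Tsub fg) ≤ ⨆ i ∈ {i : ℤ | Even i}, fg.g i :=
    Submodule.span_le.2 fun _ ⟨x, hx, y, hy, hxy⟩ => hxy ▸ lie_mem_of_mem_Tsub
      (fun i j hi hj x hx y hy => le_biSup fg.g (show Even (i + j) by
        rcases hi with rfl | rfl <;> rcases hj with rfl | rfl <;> decide)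
        (fg.lie_mem i j x y hx hy)) hx hy
  refine (fg.internal.submodule_iSupIndep.disjoint_biSup_biSup ?_).mono hodd heven
  exact Set.disjoint_left.2 fun i hi hi' => Int.not_even_iff_odd.2 hi hi'

theorem mem_gradedCentroid_of_mapsTo {χ : Module.End K L}
    (hgen : Tsub fg ⊔ brkSpan K (Tsub fg) (Tsub fg) = ⊤)
    (hχ : ∀ x y, χ ⁅x, y⁆ = ⁅χ x, y⁆) (hm : ∀ x ∈ fg.g (-1), χ x ∈ fg.g (-1))
    (hp : ∀ x ∈ fg.g 1, χ x ∈ fg.g 1) : χ ∈ GradedCentroid K fg := by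
  set N : ℤ → Submodule K L := fun i => fg.g i ⊓ (fg.g i).comap χ
  have hmem : ∀ i, ∀ x ∈ fg.g i, χ x ∈ fg.g i → x ∈ ⨆ i, N i := fun i x hx hχx =>
    Submodule.mem_iSup_of_mem i ⟨hx, hχx⟩
  have hN : iSup N = ⊤ := by
    refine eq_top_iff.2 (hgen ▸ sup_le (sup_le ?_ ?_) (Submodule.span_le.2 ?_))
    · exact fun x hx => hmem _ x hx (hm x hx)
    · exact fun x hx => hmem _ x hx (hp x hx)
    · rintro _ ⟨x, hx, y, hy, rfl⟩
      refine lie_mem_of_mem_Tsub (fun i j hi hj x hx y hy => ?_) hx hy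
      refine hmem _ _ (fg.lie_mem i j x y hx hy) ?_
      rw [hχ]
      rcases hi with rfl | rfl
      · exact fg.lie_mem _ j _ y (hm x hx) hy
      · exact fg.lie_mem _ j _ y (hp x hx) hy
  have hNg := (fg.internal.submodule_iSupIndep.le_iff_eq_of_iSup_eq_top hN).1
    fun i => inf_le_left
  refine ⟨hχ, fun i x hx => ?_⟩
  rw [← hNg] at hx
  exact hx.2

end FiveGrading

namespace Envelops

open TensorProduct

variable {K : Type*} [CommRing K] {Pm Pp : Type*}
  [AddCommGroup Pm] [AddCommGroup Pp] [Module K Pm] [Module K Pp]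
  {KP : KantorPair K Pm Pp} {L : Type*} [LieRing L] [LieAlgebra K L]
  {fg : FiveGrading K L} (E : Envelops KP fg)
  {ωm : Pm →ₗ[K] Pm} {ωp : Pp →ₗ[K] Pp}

def toLie : Pm × Pp →ₗ[K] L := E.em.coprod E.ep

theorem toLie_apply (p : Pm × Pp) : E.toLie p = E.em p.1 + E.ep p.2 := rfl

theorem em_mem (x : Pm) : E.em x ∈ fg.g (-1) := E.range_m ▸ LinearMap.mem_range_self _ x

theorem ep_mem (y : Pp) : E.ep y ∈ fg.g 1 := E.range_p ▸ LinearMap.mem_range_self _ y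

theorem range_toLie : LinearMap.range E.toLie = Tsub fg := by
  rw [toLie, LinearMap.range_coprod, E.range_m, E.range_p, Tsub]

theorem injective_toLie : Function.Injective E.toLie := by
  have hd : Disjoint (LinearMap.range E.em) (LinearMap.range E.ep) := by
    rw [E.range_m, E.range_p]
    exact fg.internal.submodule_iSupIndep.pairwiseDisjoint (by decide : (-1 : ℤ) ≠ 1)
  rw [← LinearMap.ker_eq_bot, toLie, LinearMap.ker_coprod_of_disjoint_range _ _ hd,
    LinearMap.ker_eq_bot.2 E.inj_m, LinearMap.ker_eq_bot.2 E.inj_p, Submodule.prod_bot]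

theorem lieSpan_range_toLie (ht : Tight K fg) :
    LieSubalgebra.lieSpan K L (LinearMap.range E.toLie : Set L) = ⊤ := by
  rw [range_toLie]; exact ht.1

theorem lie_lie_em_em_em (a b c : Pm) : ⁅⁅E.em a, E.em b⁆, E.em c⁆ = 0 :=
  fg.lie_lie_eq_zero (E.em_mem a) (E.em_mem b) (E.em_mem c) (by decide)

theorem lie_lie_ep_ep_ep (a b c : Pp) : ⁅⁅E.ep a, E.ep b⁆, E.ep c⁆ = 0 :=
  fg.lie_lie_eq_zero (E.ep_mem a) (E.ep_mem b) (E.ep_mem c) (by decide)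

theorem lie_lie_ep_em_em (b : Pp) (a c : Pm) :
    ⁅⁅E.ep b, E.em a⁆, E.em c⁆ = -E.em (KP.tm a b c) := by
  rw [← lie_skew (E.ep b), neg_lie, E.compat_m]

theorem lie_lie_em_ep_ep (a : Pm) (b d : Pp) :
    ⁅⁅E.em a, E.ep b⁆, E.ep d⁆ = -E.ep (KP.tp b a d) := by
  rw [← lie_skew (E.em a), neg_lie, E.compat_p]

theorem lie_lie_em_em_ep (a c : Pm) (w : Pp) :
    ⁅⁅E.em a, E.em c⁆, E.ep w⁆ = E.em (KP.tm a w c) - E.em (KP.tm c w a) := by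
  rw [lie_lie, ← lie_skew (E.em a) ⁅E.em c, E.ep w⁆, ← lie_skew (E.em c) ⁅E.em a, E.ep w⁆,
    E.compat_m, E.compat_m]
  abel

theorem lie_lie_ep_ep_em (b d : Pp) (v : Pm) :
    ⁅⁅E.ep b, E.ep d⁆, E.em v⁆ = E.ep (KP.tp b v d) - E.ep (KP.tp d v b) := by
  rw [lie_lie, ← lie_skew (E.ep b) ⁅E.ep d, E.em v⁆, ← lie_skew (E.ep d) ⁅E.ep b, E.em v⁆,
    E.compat_p, E.compat_p]
  abel

theorem lie_lie_toLie (p q r : Pm × Pp) :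
    ⁅⁅E.toLie p, E.toLie q⁆, E.toLie r⁆ = E.toLie (KP.lieTriple p q r) := by
  simp only [toLie_apply, lie_add, add_lie, KantorPair.lieTriple, map_add, map_sub,
    ← E.compat_m, ← E.compat_p, lie_lie_em_em_em, lie_lie_ep_ep_ep, lie_lie_ep_em_em,
    lie_lie_em_ep_ep, lie_lie_em_em_ep, lie_lie_ep_ep_em]
  abel

theorem Tsub_sup_brkSpan_eq_top (E : Envelops KP fg) (ht : Tight K fg) :
    Tsub fg ⊔ brkSpan K (Tsub fg) (Tsub fg) = ⊤ := by
  refine eq_top_iff.2 (le_trans ?_ (lieSpan_le_sup_brkSpan ?_))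
  · rw [← range_toLie E, lieSpan_range_toLie E ht]; exact le_rfl
  · rw [← range_toLie E]
    rintro _ ⟨p, rfl⟩ _ ⟨q, rfl⟩ _ ⟨r, rfl⟩
    exact ⟨_, (E.lie_lie_toLie p q r).symm⟩

theorem surjective_coprod_lieTensorMap (ht : Tight K fg) :
    Function.Surjective (E.toLie.coprod (lieTensorMap E.toLie E.toLie)) := by
  refine LinearMap.range_eq_top.1 (eq_top_iff.2 ?_)
  rw [← E.Tsub_sup_brkSpan_eq_top ht, LinearMap.range_coprod, range_toLie]
  refine sup_le_sup_left (Submodule.span_le.2 ?_) _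
  rintro _ ⟨x, hx, y, hy, rfl⟩
  rw [← range_toLie E] at hx hy
  obtain ⟨p, rfl⟩ := hx
  obtain ⟨q, rfl⟩ := hy
  exact ⟨p ⊗ₜ q, lieTensorMap_tmul _ _ p q⟩

theorem lie_lie_toLie_map (hc : KP.InCentroid ωm ωp) (p q r : Pm × Pp) :
    ⁅⁅E.toLie (ωm.prodMap ωp p), E.toLie q⁆, E.toLie r⁆ =
      ⁅⁅E.toLie p, E.toLie q⁆, E.toLie (ωm.prodMap ωp r)⁆ := by
  rw [lie_lie_toLie, lie_lie_toLie, hc.lieTriple_map_left, hc.lieTriple_map_right]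

-- The element `∑ ⁅ω xᵢ, yᵢ⁆` commutes with `T`, hence is central, and tightness kills it.
theorem lieTensorMap_map_eq_zero (hc : KP.InCentroid ωm ωp) (ht : Tight K fg)
    {s : (Pm × Pp) ⊗[K] (Pm × Pp)} (hs : lieTensorMap E.toLie E.toLie s = 0) :
    lieTensorMap (E.toLie ∘ₗ ωm.prodMap ωp) E.toLie s = 0 := by
  have hT : LinearMap.range E.toLie ≤ Tsub fg := (range_toLie E).le
  have hcomm : ∀ t r, ⁅lieTensorMap (E.toLie ∘ₗ ωm.prodMap ωp) E.toLie t, E.toLie r⁆ =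
      ⁅lieTensorMap E.toLie E.toLie t, E.toLie (ωm.prodMap ωp r)⁆ := fun t r => by
    induction t using TensorProduct.induction_on with
    | zero => simp
    | tmul p q => simpa using E.lie_lie_toLie_map hc p q r
    | add t t' ht ht' => rw [map_add, map_add, add_lie, add_lie, ht, ht']
  refine ht.2 _ (range_lieTensorMap_le ((LinearMap.range_comp_le_range _ _).trans hT) hT
    ⟨s, rfl⟩) (lie_eq_zero_of_lieSpan_eq_top (E.lieSpan_range_toLie ht) ?_)
  rintro _ ⟨r, rfl⟩
  rw [hcomm, hs, zero_lie]

theorem exists_comp_coprod_lieTensorMap (hc : KP.InCentroid ωm ωp) (ht : Tight K fg) :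
    ∃ χ : Module.End K L, χ ∘ₗ E.toLie.coprod (lieTensorMap E.toLie E.toLie) =
      (E.toLie ∘ₗ ωm.prodMap ωp).coprod (lieTensorMap (E.toLie ∘ₗ ωm.prodMap ωp) E.toLie) := by
  refine LinearMap.exists_comp_eq_of_surjective (E.surjective_coprod_lieTensorMap ht) ?_
  have hd : Disjoint (LinearMap.range E.toLie)
      (LinearMap.range (lieTensorMap E.toLie E.toLie)) := by
    rw [range_toLie]
    exact FiveGrading.disjoint_Tsub_brkSpan.mono_right
      (range_lieTensorMap_le (range_toLie E).le (range_toLie E).le)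
  rintro ⟨p, s⟩ h
  rw [LinearMap.ker_coprod_of_disjoint_range _ _ hd, LinearMap.ker_eq_bot.2 E.injective_toLie,
    Submodule.mem_prod, Submodule.mem_bot] at h
  obtain ⟨rfl, hs⟩ := h
  rw [LinearMap.mem_ker, LinearMap.coprod_apply, map_zero, zero_add]
  exact E.lieTensorMap_map_eq_zero hc ht hs

theorem map_lie_of_map_toLie (hc : KP.InCentroid ωm ωp) (ht : Tight K fg)
    {χ : Module.End K L} (hι : ∀ p, χ (E.toLie p) = E.toLie (ωm.prodMap ωp p))
    (hbr : ∀ s, χ (lieTensorMap E.toLie E.toLie s) =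
      lieTensorMap (E.toLie ∘ₗ ωm.prodMap ωp) E.toLie s) (u v : L) :
    χ ⁅u, v⁆ = ⁅χ u, v⁆ := by
  refine map_lie_of_lieSpan_eq_top (E.lieSpan_range_toLie ht) χ ?_ u v
  rintro u _ ⟨r, rfl⟩
  obtain ⟨⟨p, s⟩, rfl⟩ := E.surjective_coprod_lieTensorMap ht u
  rw [LinearMap.coprod_apply, add_lie, map_add, map_add, add_lie, hι, hbr]
  congr 1
  · simpa using hbr (p ⊗ₜ r)
  · induction s using TensorProduct.induction_on with
    | zero => simp
    | tmul p q =>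
      simp only [lieTensorMap_tmul, LinearMap.comp_apply]
      rw [lie_lie_toLie, lie_lie_toLie, hι, hc.lieTriple_map_left]
    | add s t hs ht => rw [map_add, map_add, add_lie, map_add, add_lie, hs, ht]

theorem exists_mem_gradedCentroid_restrRel (hc : KP.InCentroid ωm ωp) (ht : Tight K fg) :
    ∃ χ ∈ GradedCentroid K fg, RestrRel E χ (ωm, ωp) := by
  obtain ⟨χ, hχ⟩ := E.exists_comp_coprod_lieTensorMap hc ht
  have hι : ∀ p, χ (E.toLie p) = E.toLie (ωm.prodMap ωp p) := fun p => by
    simpa using LinearMap.congr_fun hχ (p, 0)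
  have hbr : ∀ s, χ (lieTensorMap E.toLie E.toLie s) =
      lieTensorMap (E.toLie ∘ₗ ωm.prodMap ωp) E.toLie s := fun s => by
    simpa [toLie_apply] using LinearMap.congr_fun hχ (0, s)
  have hr : RestrRel E χ (ωm, ωp) :=
    ⟨fun x => by simpa [toLie_apply] using hι (x, 0),
      fun y => by simpa [toLie_apply] using hι (0, y)⟩
  refine ⟨χ, FiveGrading.mem_gradedCentroid_of_mapsTo (E.Tsub_sup_brkSpan_eq_top ht)
    (E.map_lie_of_map_toLie hc ht hι hbr) ?_ ?_, hr⟩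
  · rintro _ hx
    rw [← E.range_m] at hx
    obtain ⟨x, rfl⟩ := hx
    rw [hr.1]; exact E.em_mem _
  · rintro _ hy
    rw [← E.range_p] at hy
    obtain ⟨y, rfl⟩ := hy
    rw [hr.2]; exact E.ep_mem _

end Envelops

section Restriction

variable {K : Type*} [CommRing K] {Pm Pp : Type*}
  [AddCommGroup Pm] [AddCommGroup Pp] [Module K Pm] [Module K Pp]
  {KP : KantorPair K Pm Pp} {L : Type*} [LieRing L] [LieAlgebra K L]
  {fg : FiveGrading K L} {E : Envelops KP fg} {χ χ' : Module.End K L}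
  {ω ω' : (Pm →ₗ[K] Pm) × (Pp →ₗ[K] Pp)}

theorem Envelops.exists_inCentroid_restrRel (E : Envelops KP fg)
    (hχ : χ ∈ GradedCentroid K fg) :
    ∃ ω : (Pm →ₗ[K] Pm) × (Pp →ₗ[K] Pp), KP.InCentroid ω.1 ω.2 ∧ RestrRel E χ ω := by
  obtain ⟨hlie, hgr⟩ := hχ
  obtain ⟨ωm, hωm⟩ := LinearMap.exists_comp_eq_of_injective E.inj_m (g := χ ∘ₗ E.em) (by
    rintro _ ⟨x, rfl⟩; rw [E.range_m]; exact hgr _ _ (E.em_mem x))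
  obtain ⟨ωp, hωp⟩ := LinearMap.exists_comp_eq_of_injective E.inj_p (g := χ ∘ₗ E.ep) (by
    rintro _ ⟨y, rfl⟩; rw [E.range_p]; exact hgr _ _ (E.ep_mem y))
  have hrm : ∀ x, χ (E.em x) = E.em (ωm x) := fun x => (LinearMap.congr_fun hωm x).symm
  have hrp : ∀ y, χ (E.ep y) = E.ep (ωp y) := fun y => (LinearMap.congr_fun hωp y).symm
  have hlie' : ∀ u v, χ ⁅u, v⁆ = ⁅u, χ v⁆ := fun u v => by
    rw [← lie_skew, map_neg, hlie, lie_skew]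
  refine ⟨(ωm, ωp), ⟨fun x y z => ⟨E.inj_m ?_, E.inj_m ?_, E.inj_m ?_⟩,
    fun x y z => ⟨E.inj_p ?_, E.inj_p ?_, E.inj_p ?_⟩⟩, hrm, hrp⟩
  · rw [← hrm, E.compat_m, E.compat_m, hlie, hlie, hrm]
  · rw [← hrm, E.compat_m, E.compat_m, hlie, hlie', hrp]
  · rw [← hrm, E.compat_m, E.compat_m, hlie', hrm]
  · rw [← hrp, E.compat_p, E.compat_p, hlie, hlie, hrp]
  · rw [← hrp, E.compat_p, E.compat_p, hlie, hlie', hrm]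
  · rw [← hrp, E.compat_p, E.compat_p, hlie', hrp]

theorem RestrRel.right_unique (h : RestrRel E χ ω) (h' : RestrRel E χ ω') : ω = ω' :=
  Prod.ext (LinearMap.ext fun x => E.inj_m (by rw [← h.1, h'.1]))
    (LinearMap.ext fun y => E.inj_p (by rw [← h.2, h'.2]))

theorem RestrRel.left_unique (ht : Tight K fg) (hχ : ∀ u v, χ ⁅u, v⁆ = ⁅χ u, v⁆)
    (hχ' : ∀ u v, χ' ⁅u, v⁆ = ⁅χ' u, v⁆) (h : RestrRel E χ ω) (h' : RestrRel E χ' ω) :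
    χ = χ' := by
  refine ext_of_lieSpan_eq_top (E.lieSpan_range_toLie ht) hχ hχ' ?_
  rintro _ ⟨p, rfl⟩
  rw [Envelops.toLie_apply, map_add, map_add, h.1, h.2, h'.1, h'.2]

theorem restrRel_one (E : Envelops KP fg) : RestrRel E 1 (LinearMap.id, LinearMap.id) :=
  ⟨fun _ => rfl, fun _ => rfl⟩

theorem RestrRel.mul (h : RestrRel E χ ω) (h' : RestrRel E χ' ω') :
    RestrRel E (χ * χ') (ω.1 ∘ₗ ω'.1, ω.2 ∘ₗ ω'.2) :=
  ⟨fun x => by simp [h.1, h'.1], fun y => by simp [h.2, h'.2]⟩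

theorem RestrRel.add (h : RestrRel E χ ω) (h' : RestrRel E χ' ω') :
    RestrRel E (χ + χ') (ω.1 + ω'.1, ω.2 + ω'.2) :=
  ⟨fun x => by simp [h.1, h'.1], fun y => by simp [h.2, h'.2]⟩

theorem RestrRel.smul (a : K) (h : RestrRel E χ ω) : RestrRel E (a • χ) (a • ω.1, a • ω.2) :=
  ⟨fun x => by simp [h.1], fun y => by simp [h.2]⟩

end Restriction

theorem statement2_general {K : Type*} [CommRing K]
    {Pm Pp : Type*} [AddCommGroup Pm] [AddCommGroup Pp] [Module K Pm] [Module K Pp]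
    (KP : KantorPair K Pm Pp)
    {L : Type*} [LieRing L] [LieAlgebra K L] (fg : FiveGrading K L)
    (E : Envelops KP fg) (ht : Tight K fg) :
    (∀ χ ∈ GradedCentroid K fg, ∃! ω : (Pm →ₗ[K] Pm) × (Pp →ₗ[K] Pp),
        KP.InCentroid ω.1 ω.2 ∧ RestrRel E χ ω) ∧
    (∀ ω : (Pm →ₗ[K] Pm) × (Pp →ₗ[K] Pp), KP.InCentroid ω.1 ω.2 →
        ∃! χ : Module.End K L, χ ∈ GradedCentroid K fg ∧ RestrRel E χ ω) ∧
    RestrRel E 1 (LinearMap.id, LinearMap.id) ∧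
    (∀ (χ χ' : Module.End K L) (ω ω' : (Pm →ₗ[K] Pm) × (Pp →ₗ[K] Pp)),
      RestrRel E χ ω → RestrRel E χ' ω' →
        RestrRel E (χ * χ') (ω.1 ∘ₗ ω'.1, ω.2 ∘ₗ ω'.2) ∧
        RestrRel E (χ + χ') (ω.1 + ω'.1, ω.2 + ω'.2)) ∧
    (∀ (a : K) (χ : Module.End K L) (ω : (Pm →ₗ[K] Pm) × (Pp →ₗ[K] Pp)),
      RestrRel E χ ω → RestrRel E (a • χ) (a • ω.1, a • ω.2)) := by
  refine ⟨fun χ hχ => ?_, fun ω hω => ?_, restrRel_one E,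
    fun χ χ' ω ω' h h' => ⟨h.mul h', h.add h'⟩, fun a χ ω h => h.smul a⟩
  · obtain ⟨ω, hω, hr⟩ := E.exists_inCentroid_restrRel hχ
    exact ⟨ω, ⟨hω, hr⟩, fun ω' hω' => hω'.2.right_unique hr⟩
  · obtain ⟨χ, hχ, hr⟩ := E.exists_mem_gradedCentroid_restrRel hω ht
    exact ⟨χ, ⟨hχ, hr⟩, fun χ' hχ' => hχ'.2.left_unique ht hχ'.1.1 hχ.1 hr⟩

/-- For a Kantor pair `P`, the restriction map
`χ ↦ (χ|_{P⁻}, χ|_{P⁺})` is an isomorphism of unital associative `K`-algebras from the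
graded centroid `C(𝔎(P), ℤ)` onto the centroid `C(P)`.  (`𝔎(P)` is represented by an
arbitrary 5-graded Lie algebra `L` tightly enveloping `P`.)  Bijectivity is expressed by
the two `∃!` clauses, and the algebra-homomorphism property by the compatibility of the
restriction relation with identity, composition, addition and scalar multiplication. -/
theorem statement2 {K : Type*} [CommRing K] (h6 : IsUnit (6 : K))
    {Pm Pp : Type*} [AddCommGroup Pm] [AddCommGroup Pp] [Module K Pm] [Module K Pp]
    (KP : KantorPair K Pm Pp)
    {L : Type*} [LieRing L] [LieAlgebra K L] (fg : FiveGrading K L)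
    (E : Envelops KP fg) (ht : Tight K fg) :
    (∀ χ ∈ GradedCentroid K fg, ∃! ω : (Pm →ₗ[K] Pm) × (Pp →ₗ[K] Pp),
        KP.InCentroid ω.1 ω.2 ∧ RestrRel E χ ω) ∧
    (∀ ω : (Pm →ₗ[K] Pm) × (Pp →ₗ[K] Pp), KP.InCentroid ω.1 ω.2 →
        ∃! χ : Module.End K L, χ ∈ GradedCentroid K fg ∧ RestrRel E χ ω) ∧
    RestrRel E 1 (LinearMap.id, LinearMap.id) ∧
    (∀ (χ χ' : Module.End K L) (ω ω' : (Pm →ₗ[K] Pm) × (Pp →ₗ[K] Pp)),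
      RestrRel E χ ω → RestrRel E χ' ω' →
        RestrRel E (χ * χ') (ω.1 ∘ₗ ω'.1, ω.2 ∘ₗ ω'.2) ∧
        RestrRel E (χ + χ') (ω.1 + ω'.1, ω.2 + ω'.2)) ∧
    (∀ (a : K) (χ : Module.End K L) (ω : (Pm →ₗ[K] Pm) × (Pp →ₗ[K] Pp)),
      RestrRel E χ ω → RestrRel E (a • χ) (a • ω.1, a • ω.2)) :=
  statement2_general KP fg E ht
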